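/- Suppose n ≥ 2, let W be a PBRAG trajectory and q a task, and suppose some agent i dominating for q satisfies W t i q → 1 as t → ∞. Then for every agent j that is not dominating for q there exists τ : ℕ such that W t j q = 0 for all t ≥ τ. -/

import Mathlib

open Finset Filter

noncomputable def fsMax (s : Finset ℝ) : ℝ := s.max.unbotD 0

noncomputable def fsMin (s : Finset ℝ) : ℝ := s.min.untopD 0

noncomputable def fsSubmax (s : Finset ℝ) : ℝ := fsMax (s.filter (fun x => x < fsMax s))

/-- Agent `i` is dominating for task `q`. -/
def Dominating {n m : ℕ} (f : Fin n → Fin m → ℝ) (i : Fin n) (q : Fin m) : Prop :=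
  ∀ j, f j q ≤ f i q

/-- Maximum of `g j` over all `j ≠ i` (0 if that set is empty). -/
noncomputable def maxErase {n : ℕ} (i : Fin n) (g : Fin n → ℝ) : ℝ :=
  fsMax ((Finset.univ.erase i).image g)

/-- Utility of agent `i` in the weight game. -/
noncomputable def Uutil {n m : ℕ} (f : Fin n → Fin m → ℝ) (w : Fin n → Fin m → ℝ)
    (i : Fin n) : ℝ :=
  ∑ q, (f i q * w i q - maxErase i (fun j => f j q * w j q) * w i q)

/-- All entries of the matrix lie in `[0,1]`. -/
def InUnit {n m : ℕ} (w : Fin n → Fin m → ℝ) : Prop :=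
  ∀ i q, w i q ∈ Set.Icc (0 : ℝ) 1

/-- Nash equilibrium of the weight game. -/
def IsNashW {n m : ℕ} (f : Fin n → Fin m → ℝ) (w : Fin n → Fin m → ℝ) : Prop :=
  ∀ i, ∀ w' : Fin m → ℝ, (∀ q, w' q ∈ Set.Icc (0 : ℝ) 1) →
    Uutil f (Function.update w i w') i ≤ Uutil f w i

noncomputable def clamp (x : ℝ) : ℝ := max 0 (min x 1)

/-- One step of the projected best-response ascending gradient dynamics. -/
noncomputable def pbrag {n m : ℕ} (f γ : Fin n → Fin m → ℝ)
    (w : Fin n → Fin m → ℝ) : Fin n → Fin m → ℝ :=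
  fun i q => clamp (w i q + γ i q * (f i q - maxErase i (fun j => f j q * w j q)))

/-!
Once the dominating agent `i` has weight close to `1`, the competing bid `f i q * W t i q` seen by
a non-dominating agent `j` exceeds `f j q` by a fixed margin, so the gradient step of `j` is
bounded above by a fixed negative constant. The clamped weight of `j` therefore decreases by a
fixed amount at every step until it reaches `0`, where it stays.
-/

lemma le_fsMax {s : Finset ℝ} {x : ℝ} (hx : x ∈ s) : x ≤ fsMax s := by
  obtain ⟨a, ha⟩ := Finset.max_of_mem hx
  have hxa : (x : WithBot ℝ) ≤ a := ha ▸ Finset.le_max hx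
  simpa [fsMax, ha] using hxa

lemma le_maxErase {n : ℕ} {i j : Fin n} (hij : i ≠ j) (g : Fin n → ℝ) : g i ≤ maxErase j g :=
  le_fsMax (Finset.mem_image_of_mem g (Finset.mem_erase.2 ⟨hij, Finset.mem_univ i⟩))

lemma clamp_nonneg (x : ℝ) : 0 ≤ clamp x := le_max_left _ _

lemma clamp_le_max_zero (x : ℝ) : clamp x ≤ max 0 x := max_le_max le_rfl (min_le_left _ _)

lemma pbrag_le_max_zero_sub {n m : ℕ} {f γ w : Fin n → Fin m → ℝ} {i j : Fin n} (hij : i ≠ j)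
    {q : Fin m} (hγ : 0 ≤ γ j q) :
    pbrag f γ w j q ≤ max 0 (w j q - γ j q * (f i q * w i q - f j q)) := by
  have hrival := mul_le_mul_of_nonneg_left (le_maxErase hij fun k => f k q * w k q) hγ
  refine (clamp_le_max_zero _).trans ?_
  gcongr
  linarith

lemma eventually_nonpos_of_le_max_zero_sub {u : ℕ → ℝ} {δ : ℝ} (hδ : 0 < δ)
    (hstep : ∀ᶠ t in atTop, u (t + 1) ≤ max 0 (u t - δ)) : ∀ᶠ t in atTop, u t ≤ 0 := by
  obtain ⟨t₀, ht₀⟩ := eventually_atTop.1 hstep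
  have hdecay : ∀ k : ℕ, u (t₀ + k) ≤ max 0 (u t₀ - k * δ) := by
    intro k
    induction k with
    | zero => simp
    | succ k ih =>
      calc u (t₀ + (k + 1)) ≤ max 0 (u (t₀ + k) - δ) := ht₀ _ (Nat.le_add_right _ _)
        _ ≤ max 0 (max 0 (u t₀ - k * δ) - δ) := by gcongr
        _ ≤ max 0 (u t₀ - (k + 1 : ℕ) * δ) := by push_cast; grind
  obtain ⟨K, hK⟩ := exists_nat_ge (u t₀ / δ)
  refine eventually_atTop.2 ⟨t₀ + K, fun t ht => ?_⟩
  obtain ⟨k, rfl⟩ := Nat.exists_eq_add_of_le (le_of_add_le_left ht)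
  have hKk : (K : ℝ) ≤ k := by exact_mod_cast Nat.le_of_add_le_add_left ht
  have hsub : u t₀ - k * δ ≤ 0 := by
    have := mul_le_mul_of_nonneg_right hKk hδ.le
    rw [div_le_iff₀ hδ] at hK
    linarith
  simpa [max_eq_left hsub] using hdecay k

theorem pbrag_nondominating_vanishes_general {n m : ℕ} (f : Fin n → Fin m → ℝ)
    (γ : Fin n → Fin m → ℝ) (hγ : ∀ i q, 0 < γ i q)
    (W : ℕ → Fin n → Fin m → ℝ)
    (hWs : ∀ t, W (t + 1) = pbrag f γ (W t))
    (q : Fin m) (i : Fin n) (hdom : Dominating f i q)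
    (hlim : Tendsto (fun t => W t i q) atTop (nhds 1)) :
    ∀ j : Fin n, ¬ Dominating f j q → ∃ τ : ℕ, ∀ t, τ ≤ t → W t j q = 0 := by
  intro j hj
  have hfij : f j q < f i q := by
    obtain ⟨k, hk⟩ := not_forall.1 hj
    exact (not_le.1 hk).trans_le (hdom k)
  have hij : i ≠ j := by rintro rfl; exact hj hdom
  obtain ⟨ε, hgap, hε⟩ := exists_add_lt_and_pos_of_lt hfij
  have hmargin : ∀ᶠ t in atTop, f j q + ε < f i q * W t i q :=
    (hlim.const_mul (f i q)).eventually (eventually_gt_nhds (by rwa [mul_one]))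
  have hstep : ∀ᶠ t in atTop, W (t + 1) j q ≤ max 0 (W t j q - γ j q * ε) :=
    hmargin.mono fun t ht => by
      rw [hWs]
      refine (pbrag_le_max_zero_sub hij (hγ j q).le).trans ?_
      gcongr
      · exact (hγ j q).le
      · linarith
  have hnonneg : ∀ᶠ t in atTop, 0 ≤ W t j q := by
    refine (eventually_gt_atTop 0).mono fun t ht => ?_
    obtain ⟨t, rfl⟩ := Nat.exists_eq_add_of_lt ht
    rw [hWs]
    exact clamp_nonneg _
  have hvanish : ∀ᶠ t in atTop, W t j q ≤ 0 :=
    eventually_nonpos_of_le_max_zero_sub (u := fun t => W t j q) (mul_pos (hγ j q) hε) hstep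
  exact eventually_atTop.1 ((hnonneg.and hvanish).mono fun t ht => le_antisymm ht.2 ht.1)

theorem pbrag_nondominating_vanishes {n m : ℕ} (hn : 2 ≤ n) (f : Fin n → Fin m → ℝ)
    (hf : ∀ i q, 0 ≤ f i q)
    (γ : Fin n → Fin m → ℝ) (hγ : ∀ i q, 0 < γ i q)
    (W : ℕ → Fin n → Fin m → ℝ)
    (hW0 : InUnit (W 0)) (hWs : ∀ t, W (t + 1) = pbrag f γ (W t))
    (q : Fin m) (i : Fin n) (hdom : Dominating f i q)
    (hlim : Tendsto (fun t => W t i q) atTop (nhds 1)) :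
    ∀ j : Fin n, ¬ Dominating f j q → ∃ τ : ℕ, ∀ t, τ ≤ t → W t j q = 0 :=
  pbrag_nondominating_vanishes_general f γ hγ W hWs q i hdom hlim
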